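/- Under the assumptions on F, let C = max{e², 2/(1−ρ)}. Then for all integers k, l, m ≥ 0 and all complex z with |z| ≤ 1, the m-th derivative of a_l^k satisfies |(d^m/dz^m) a_l^k(z)| ≤ C^k. -/

import Mathlib

open scoped BigOperators

noncomputable section

/-- Polynomials in `z` (outer variable) with coefficients polynomials in `y` (inner variable);
this is the ring in which the coefficients `P^(k)(z,y)` live. -/
abbrev Bzy : Type := Polynomial (Polynomial ℂ)

/-- The variable `y` as an element of `Bzy` (the outer variable `Polynomial.X` is `z`). -/
def yB : Bzy := Polynomial.C Polynomial.X

/-- A complex constant as an element of `Bzy`. -/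
def cB (c : ℂ) : Bzy := Polynomial.C (Polynomial.C c)

/-- The power series `u = z + q (y - z)` in the variable `q`, with coefficients in `Bzy`. -/
def useries : PowerSeries Bzy :=
  PowerSeries.C (R := Bzy) Polynomial.X + PowerSeries.X * PowerSeries.C (R := Bzy) (yB - Polynomial.X)

/-- The inclusion of complex constants into `Bzy[[q]]`. -/
def constHom : ℂ →+* PowerSeries Bzy :=
  (PowerSeries.C (R := Bzy)).comp
    ((Polynomial.C : Polynomial ℂ →+* Bzy).comp (Polynomial.C : ℂ →+* Polynomial ℂ))

/-- Substitution of `u = z + q(y-z)` for the variable in a polynomial in `y`. -/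
def substY : Polynomial ℂ →+* PowerSeries Bzy :=
  Polynomial.eval₂RingHom constHom useries

/-- Substitution `z ↦ z`, `y ↦ u = z + q(y-z)` in a polynomial in `z` and `y`. -/
def substZY : Bzy →+* PowerSeries Bzy :=
  Polynomial.eval₂RingHom substY (PowerSeries.C (R := Bzy) Polynomial.X)

/-- The formal functional equation `z·F(z,y) = (1-ρ+ρu)·[(z-1)·F(0,u) + F(z,u)]`, where
`F = Σ_k q^k P^(k)(z,y)`, `F(0,u)` is obtained by setting `z = 0` (i.e. taking the coefficient
of `z^0`) and substituting `u` for `y`, and `F(z,u)` by substituting `u` for `y`; the `m`-th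
coefficient of `F(z,u)` is `Σ_{k ≤ m} [q^(m-k)] (P^(k)(z, z + q(y-z)))`, and similarly
for `F(0,u)`. -/
def FuncEq (ρ : ℝ) (P : ℕ → Bzy) : Prop :=
  PowerSeries.C (R := Bzy) Polynomial.X * PowerSeries.mk (fun k => P k) =
    (constHom (1 - (ρ : ℂ)) + constHom (ρ : ℂ) * useries) *
      (PowerSeries.C (R := Bzy) (Polynomial.X - 1) *
          PowerSeries.mk (fun m => ∑ k ∈ Finset.range (m + 1),
            PowerSeries.coeff (R := Bzy) (m - k) (substY ((P k).coeff 0))) +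
        PowerSeries.mk (fun m => ∑ k ∈ Finset.range (m + 1),
          PowerSeries.coeff (R := Bzy) (m - k) (substZY (P k))))

/-- `P^(0)(z,y)` does not depend on `y`. -/
def IndepY (P : ℕ → Bzy) : Prop := ∀ n : ℕ, ∃ c : ℂ, (P 0).coeff n = Polynomial.C c

/-- Boundary conditions: `P^(0)(0,1) = 1 - ρ` and `P^(k)(0,1) = 0` for all `k ≥ 1`. -/
def Boundary (ρ : ℝ) (P : ℕ → Bzy) : Prop :=
  ((P 0).coeff 0).eval 1 = 1 - (ρ : ℂ) ∧ ∀ k : ℕ, 1 ≤ k → ((P k).coeff 0).eval 1 = 0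

/-- Derivative with respect to the inner variable `y`. -/
def dy (p : Bzy) : Bzy :=
  p.sum fun n a => Polynomial.C (Polynomial.derivative a) * Polynomial.X ^ n

/-- The polynomial `P^(k)(0,y) + (P^(k)(z,y) - P^(k)(0,y))/z`, where the quotient is exact
polynomial division by the monic polynomial `z`. -/
def bracket (P : ℕ → Bzy) (k : ℕ) : Bzy :=
  Polynomial.C ((P k).coeff 0) + (P k - Polynomial.C ((P k).coeff 0)) /ₘ Polynomial.X

/-- `a_j^k(z) = ∂_y^j [P^(k)(0,y) + (P^(k)(z,y) - P^(k)(0,y))/z] |_{y=z}`, a polynomial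
in the single variable `z`. -/
def aCoef (P : ℕ → Bzy) (j k : ℕ) : Polynomial ℂ :=
  Polynomial.eval₂ (RingHom.id (Polynomial ℂ)) Polynomial.X ((dy^[j]) (bracket P k))

/-- Reinterpret a polynomial in the single variable `z` as an element of `Bzy`. -/
def embZ : Polynomial ℂ →+* Bzy := Polynomial.mapRingHom (Polynomial.C : ℂ →+* Polynomial ℂ)

/-- `A_j^k(z) = jρ a_{j-1}^{k-j}(z) + (1+ρ(z-1)) a_j^{k-j}(z)` for `1 ≤ j ≤ k`,
`A_0^0(z) = 1 + ρ(z-1)`, and `A_j^k(z) = 0` otherwise. -/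
def Acoef (ρ : ℝ) (P : ℕ → Bzy) (j k : ℕ) : Polynomial ℂ :=
  if 1 ≤ j ∧ j ≤ k then
    (j : Polynomial ℂ) * Polynomial.C (ρ : ℂ) * aCoef P (j - 1) (k - j) +
      (1 + Polynomial.C (ρ : ℂ) * (Polynomial.X - 1)) * aCoef P j (k - j)
  else if j = 0 ∧ k = 0 then 1 + Polynomial.C (ρ : ℂ) * (Polynomial.X - 1)
  else 0

end

/-!
Write `c_k = P^(k)(0, ·)` and `B_k = c_k(y) + (P^(k)(z, y) - c_k(y)) / z`, so that
`a_j^k = j! â_j^k` with `â_j^k(z)` the `j`-th Hasse derivative in `y` of `B_k` at `y = z`.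
Expanding `B_k(z, z + q(y - z))` by Taylor's formula turns the functional equation into
`(1 - ρ) a_0^k = c_k`, `a_j^k = 0` for `j > k`, and for `1 ≤ j ≤ k`
`z a_j^k = (1 - ρ + ρz) a_j^{k-j} + jρ a_{j-1}^{k-j} + (z - 1) c_k^{(j)}`,
`i! [c_k]_i = (1 - ρ) a_i^{k-i}(0) + iρ a_{i-1}^{k-i}(0)`.

All estimates are in the norm `‖p‖ = Σ n! |p_n|`: it dominates `|p^{(m)}(z)|` on the closed
unit disc and does not grow under differentiation or under division by `z`. With `x = 1/C`, a
strong induction on `k` gives `‖a_0^k‖ x^k ≤ 1` and `‖a_j^k‖ x^k ≤ 12/25` for `j ≥ 1`. The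
coefficients of `c_k` are controlled by the induction hypothesis and decay like `(2x)^i`, which is
small because `C ≥ e² ≥ 7`; the constant term of `c_k` is controlled by `c_k(1) = 0`; and
`C ≥ 2/(1 - ρ)` absorbs the factor `1/(1 - ρ)` in `a_0^k = c_k/(1 - ρ)`.
-/

open Polynomial Finset
open scoped Nat

lemma hasseDeriv_succ_X_mul {R : Type*} [CommSemiring R] (j : ℕ) (p : R[X]) :
    hasseDeriv (j + 1) (X * p) = X * hasseDeriv (j + 1) p + hasseDeriv j p := by
  ext n
  rcases n with _ | n
  · simp [hasseDeriv_coeff, coeff_X_mul]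
  · simp only [hasseDeriv_coeff, coeff_add, coeff_X_mul, Nat.choose_succ_succ' (n + j + 1) j,
      show n + 1 + (j + 1) = n + j + 1 + 1 by omega, show n + 1 + j = n + j + 1 by omega]
    rw [← add_assoc]
    push_cast
    ring

section DiagHasse

/-- `diagHasse j Q = (D_y^{(j)} Q)(z, z)`, where `D^{(j)}` is the `j`-th Hasse derivative. -/
noncomputable def diagHasse (j : ℕ) : Bzy →ₗ[ℂ] ℂ[X] :=
  lsum fun n => LinearMap.mulRight ℂ (X ^ n) ∘ₗ hasseDeriv j

lemma diagHasse_monomial (j n : ℕ) (a : ℂ[X]) :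
    diagHasse j (monomial n a) = hasseDeriv j a * X ^ n := by
  simp [diagHasse, sum_monomial_index]

lemma diagHasse_C (j : ℕ) (a : ℂ[X]) : diagHasse j (C a) = hasseDeriv j a := by
  rw [← monomial_zero_left, diagHasse_monomial, pow_zero, mul_one]

lemma diagHasse_X_mul (j : ℕ) (Q : Bzy) : diagHasse j (X * Q) = X * diagHasse j Q := by
  induction Q using Polynomial.induction_on' with
  | add p q hp hq => rw [mul_add, map_add, hp, hq, map_add, mul_add]
  | monomial n a => rw [X_mul_monomial, diagHasse_monomial, diagHasse_monomial, pow_succ]; ring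

lemma diagHasse_cB_mul (j : ℕ) (c : ℂ) (Q : Bzy) :
    diagHasse j (cB c * Q) = C c * diagHasse j Q := by
  have h : cB c * Q = c • Q := by rw [Algebra.smul_def]; rfl
  rw [h, map_smul, Algebra.smul_def]; rfl

lemma eval_zero_diagHasse (j : ℕ) (Q : Bzy) : (diagHasse j Q).eval 0 = (Q.coeff 0).coeff j := by
  induction Q using Polynomial.induction_on' with
  | add p q hp hq => rw [map_add, eval_add, hp, hq, coeff_add, coeff_add]
  | monomial n a =>
    rw [diagHasse_monomial, eval_mul, eval_pow, eval_X, coeff_monomial]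
    rcases n with _ | n
    · simp [hasseDeriv_coeff, ← coeff_zero_eq_eval_zero]
    · simp

lemma embZ_X : embZ X = X := map_X _

lemma diagHasse_embZ_mul (j : ℕ) (r : ℂ[X]) (Q : Bzy) :
    diagHasse j (embZ r * Q) = r * diagHasse j Q := by
  induction r using Polynomial.induction_on generalizing Q with
  | C a => rw [show embZ (C a) = cB a from map_C _, diagHasse_cB_mul]
  | add p q hp hq => rw [map_add, add_mul, map_add, hp, hq, add_mul]
  | monomial n a ih =>
    have h : embZ (C a * X ^ (n + 1)) * Q = embZ (C a * X ^ n) * (X * Q) := by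
      rw [pow_succ, ← mul_assoc, map_mul, embZ_X, mul_assoc]
    rw [h, ih, diagHasse_X_mul]; ring

lemma yB_sub_X_mul_monomial (n : ℕ) (a : ℂ[X]) :
    (yB - X) * monomial n a = monomial n (X * a) - monomial (n + 1) a := by
  rw [sub_mul, yB, C_mul_monomial, X_mul_monomial]

lemma diagHasse_succ_yB_sub_X_mul (j : ℕ) (Q : Bzy) :
    diagHasse (j + 1) ((yB - X) * Q) = diagHasse j Q := by
  induction Q using Polynomial.induction_on' with
  | add p q hp hq => rw [mul_add, map_add, hp, hq, map_add]
  | monomial n a =>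
    rw [yB_sub_X_mul_monomial, map_sub, diagHasse_monomial, diagHasse_monomial,
      diagHasse_monomial, hasseDeriv_succ_X_mul]
    ring

lemma diagHasse_zero_yB_sub_X_mul (Q : Bzy) : diagHasse 0 ((yB - X) * Q) = 0 := by
  induction Q using Polynomial.induction_on' with
  | add p q hp hq => rw [mul_add, map_add, hp, hq, add_zero]
  | monomial n a =>
    rw [yB_sub_X_mul_monomial, map_sub, diagHasse_monomial, diagHasse_monomial, hasseDeriv_zero',
      hasseDeriv_zero']
    ring

lemma diagHasse_yB_sub_X_pow_mul_embZ (i j : ℕ) (r : ℂ[X]) :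
    diagHasse j ((yB - X) ^ i * embZ r) = if i = j then r else 0 := by
  induction i generalizing j with
  | zero =>
    rw [pow_zero, one_mul, ← mul_one (embZ r), diagHasse_embZ_mul, ← C_1, diagHasse_C]
    rcases j with _ | j
    · simp
    · simp [hasseDeriv_apply_one]
  | succ i ih =>
    rw [pow_succ', mul_assoc]
    rcases j with _ | j
    · rw [diagHasse_zero_yB_sub_X_mul, if_neg i.succ_ne_zero]
    · simp [diagHasse_succ_yB_sub_X_mul, ih]

end DiagHasse

section Taylor

lemma coeff_zero_mul_useries (f : PowerSeries Bzy) :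
    PowerSeries.coeff 0 (f * useries) = X * PowerSeries.coeff 0 f := by
  simp [useries, mul_add, PowerSeries.coeff_zero_eq_constantCoeff, mul_comm]

lemma coeff_succ_mul_useries (f : PowerSeries Bzy) (i : ℕ) :
    PowerSeries.coeff (i + 1) (f * useries) =
      X * PowerSeries.coeff (i + 1) f + (yB - X) * PowerSeries.coeff i f := by
  rw [useries, mul_add, ← mul_assoc, map_add, mul_comm f, mul_comm f, mul_assoc,
    PowerSeries.coeff_C_mul, PowerSeries.coeff_succ_X_mul, mul_comm _ (PowerSeries.C _),
    PowerSeries.coeff_C_mul]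

lemma coeff_substY (p : ℂ[X]) (i : ℕ) :
    PowerSeries.coeff i (substY p) = (yB - X) ^ i * embZ (hasseDeriv i p) := by
  induction p using Polynomial.induction_on generalizing i with
  | C a =>
    rcases i with _ | i
    · simp [substY, constHom, embZ]
    · simp [substY, constHom, hasseDeriv_C]
  | add p q hp hq => rw [map_add, map_add, hp, hq, map_add, map_add, mul_add]
  | monomial n a ih =>
    have hX : C a * X ^ (n + 1) = X * (C a * X ^ n) := by ring
    have h : substY (X * (C a * X ^ n)) = substY (C a * X ^ n) * useries := by
      rw [map_mul, mul_comm, show substY X = useries from eval₂_X _ _]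
    rw [hX, h]
    rcases i with _ | i
    · rw [coeff_zero_mul_useries, ih, hasseDeriv_zero', hasseDeriv_zero', map_mul embZ X, embZ_X]
      ring
    · rw [coeff_succ_mul_useries, ih, ih, hasseDeriv_succ_X_mul, map_add, map_mul embZ X, embZ_X]
      ring

lemma substZY_X : substZY X = PowerSeries.C X := eval₂_X _ _

lemma substZY_C (p : ℂ[X]) : substZY (C p) = substY p := eval₂_C _ _

lemma coeff_substZY (Q : Bzy) (i : ℕ) :
    PowerSeries.coeff i (substZY Q) = (yB - X) ^ i * embZ (diagHasse i Q) := by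
  induction Q using Polynomial.induction_on' with
  | add p q hp hq => rw [map_add, map_add, hp, hq, map_add, map_add, mul_add]
  | monomial n a =>
    have h : substZY (monomial n a) = substY a * PowerSeries.C (X ^ n) := by
      simp [substZY, eval₂_monomial]
    rw [h, PowerSeries.coeff_mul_C, coeff_substY, diagHasse_monomial, map_mul, map_pow, embZ_X]
    ring

end Taylor

section FunctionalEquation

variable {ρ : ℝ} {P : ℕ → Bzy}

lemma X_mul_bracket (P : ℕ → Bzy) (k : ℕ) :
    X * bracket P k = P k + (X - 1) * C ((P k).coeff 0) := by
  have hdiv := modByMonic_add_div (P k - C ((P k).coeff 0)) X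
  rw [modByMonic_X, eval_sub, eval_C, ← coeff_zero_eq_eval_zero, sub_self, C_0, zero_add] at hdiv
  rw [bracket, mul_add, hdiv]
  ring

noncomputable def hatA (P : ℕ → Bzy) (j k : ℕ) : ℂ[X] := diagHasse j (bracket P k)

/-- The coefficient of `q ^ m` in `B(z, z + q(y - z))`, where `B = Σ_k q^k B_k`. -/
noncomputable def taylorSum (P : ℕ → Bzy) (m : ℕ) : Bzy :=
  ∑ j ∈ range (m + 1), (yB - X) ^ j * embZ (hatA P j (m - j))

lemma diagHasse_taylorSum (P : ℕ → Bzy) (j m : ℕ) :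
    diagHasse j (taylorSum P m) = if j ≤ m then hatA P j (m - j) else 0 := by
  simp only [taylorSum, map_sum, diagHasse_yB_sub_X_pow_mul_embZ, sum_ite_eq', mem_range,
    Nat.lt_succ_iff]

lemma X_sub_one_mul_add_eq_X_mul_mk_taylorSum (P : ℕ → Bzy) :
    PowerSeries.C (X - 1) * PowerSeries.mk (fun m => ∑ k ∈ range (m + 1),
        PowerSeries.coeff (m - k) (substY ((P k).coeff 0))) +
      PowerSeries.mk (fun m => ∑ k ∈ range (m + 1), PowerSeries.coeff (m - k) (substZY (P k))) =
    PowerSeries.C X * PowerSeries.mk (taylorSum P) := by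
  refine PowerSeries.ext fun m => ?_
  have hB : ∀ k, substZY (X * bracket P k) =
      PowerSeries.C X * substZY (bracket P k) := fun k => by
    rw [map_mul, substZY_X]
  have hP : ∀ k, substZY (X * bracket P k) =
      substZY (P k) + PowerSeries.C (X - 1) * substY ((P k).coeff 0) := fun k => by
    rw [X_mul_bracket, map_add, map_mul, map_sub, map_one, substZY_X, substZY_C, map_sub, map_one]
  simp only [map_add, PowerSeries.coeff_C_mul, PowerSeries.coeff_mk, taylorSum, mul_sum,
    ← sum_add_distrib]
  rw [← sum_range_reflect]
  refine sum_congr rfl fun k hk => ?_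
  have hk' : m + 1 - 1 - k = m - k := rfl
  rw [hk', show m - (m - k) = k by rw [mem_range] at hk; omega, add_comm,
    ← PowerSeries.coeff_C_mul, ← map_add, ← hP, hB, PowerSeries.coeff_C_mul, coeff_substZY]
  rfl

lemma constHom_add_mul_useries (ρ : ℝ) :
    constHom (1 - (ρ : ℂ)) + constHom (ρ : ℂ) * useries =
      PowerSeries.C (embZ (1 + C (ρ : ℂ) * (X - 1))) +
        PowerSeries.X * PowerSeries.C (cB ρ * (yB - X)) := by
  have h : embZ (1 + C (ρ : ℂ) * (X - 1)) = cB (1 - ρ) + cB ρ * X := by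
    simp only [embZ, cB, map_add, map_mul, map_sub, map_one, coe_mapRingHom, map_C, map_X]
    ring
  simp only [constHom, useries, h, RingHom.coe_comp, Function.comp_apply, map_add, map_mul, cB]
  ring

lemma mk_eq_of_funcEq (hF : FuncEq ρ P) :
    PowerSeries.mk P = (PowerSeries.C (embZ (1 + C (ρ : ℂ) * (X - 1))) +
        PowerSeries.X * PowerSeries.C (cB ρ * (yB - X))) * PowerSeries.mk (taylorSum P) := by
  rw [FuncEq, X_sub_one_mul_add_eq_X_mul_mk_taylorSum, constHom_add_mul_useries,
    mul_left_comm] at hF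
  exact mul_left_cancel₀ ((map_ne_zero_iff _ PowerSeries.C_injective).2 X_ne_zero) hF

lemma P_zero_eq (hF : FuncEq ρ P) : P 0 = embZ (1 + C (ρ : ℂ) * (X - 1)) * taylorSum P 0 := by
  simpa using congrArg (PowerSeries.coeff 0) (mk_eq_of_funcEq hF)

lemma P_succ_eq (hF : FuncEq ρ P) (n : ℕ) :
    P (n + 1) = embZ (1 + C (ρ : ℂ) * (X - 1)) * taylorSum P (n + 1) +
      cB ρ * ((yB - X) * taylorSum P n) := by
  have h := congrArg (PowerSeries.coeff (n + 1)) (mk_eq_of_funcEq hF)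
  rwa [add_mul, map_add, PowerSeries.coeff_C_mul, mul_assoc, PowerSeries.coeff_succ_X_mul,
    PowerSeries.coeff_C_mul, PowerSeries.coeff_mk, PowerSeries.coeff_mk, PowerSeries.coeff_mk,
    mul_assoc] at h

lemma diagHasse_zero_P (hF : FuncEq ρ P) (k : ℕ) :
    diagHasse 0 (P k) = (1 + C (ρ : ℂ) * (X - 1)) * hatA P 0 k := by
  rcases k with _ | k
  · rw [P_zero_eq hF, diagHasse_embZ_mul, diagHasse_taylorSum, if_pos le_rfl]
  · rw [P_succ_eq hF, map_add, diagHasse_embZ_mul, diagHasse_cB_mul, diagHasse_zero_yB_sub_X_mul,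
      mul_zero, add_zero, diagHasse_taylorSum, if_pos (Nat.zero_le _), Nat.sub_zero]

lemma diagHasse_P_of_le (hF : FuncEq ρ P) {j k : ℕ} (hj : 1 ≤ j) (hjk : j ≤ k) :
    diagHasse j (P k) =
      (1 + C (ρ : ℂ) * (X - 1)) * hatA P j (k - j) + C (ρ : ℂ) * hatA P (j - 1) (k - j) := by
  obtain ⟨k, rfl⟩ : ∃ k', k = k' + 1 := ⟨k - 1, by omega⟩
  obtain ⟨j, rfl⟩ : ∃ j', j = j' + 1 := ⟨j - 1, by omega⟩
  rw [P_succ_eq hF, map_add, diagHasse_embZ_mul, diagHasse_cB_mul, diagHasse_succ_yB_sub_X_mul,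
    diagHasse_taylorSum, diagHasse_taylorSum, if_pos hjk, if_pos (by omega),
    Nat.add_sub_add_right, Nat.add_sub_cancel]

lemma diagHasse_P_of_lt (hF : FuncEq ρ P) {j k : ℕ} (hkj : k < j) : diagHasse j (P k) = 0 := by
  rcases k with _ | k
  · rw [P_zero_eq hF, diagHasse_embZ_mul, diagHasse_taylorSum, if_neg (by omega), mul_zero]
  · obtain ⟨j, rfl⟩ : ∃ j', j = j' + 1 := ⟨j - 1, by omega⟩
    rw [P_succ_eq hF, map_add, diagHasse_embZ_mul, diagHasse_cB_mul, diagHasse_succ_yB_sub_X_mul,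
      diagHasse_taylorSum, diagHasse_taylorSum, if_neg (by omega), if_neg (by omega), mul_zero,
      mul_zero, add_zero]

lemma X_mul_hatA (P : ℕ → Bzy) (j k : ℕ) :
    X * hatA P j k = diagHasse j (P k) + (X - 1) * hasseDeriv j ((P k).coeff 0) := by
  have h : (X - 1 : Bzy) = embZ (X - 1) := by rw [map_sub, embZ_X, map_one]
  rw [hatA, ← diagHasse_X_mul, X_mul_bracket, map_add, h, diagHasse_embZ_mul, diagHasse_C]

lemma natDegree_coeff_zero_le (hF : FuncEq ρ P) (k : ℕ) : ((P k).coeff 0).natDegree ≤ k :=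
  natDegree_le_iff_coeff_eq_zero.2 fun _ hi => by
    rw [← eval_zero_diagHasse, diagHasse_P_of_lt hF hi, eval_zero]

end FunctionalEquation

section ACoef

variable {ρ : ℝ} {P : ℕ → Bzy}

lemma dy_add (p q : Bzy) : dy (p + q) = dy p + dy q :=
  sum_add_index p q _ (fun n => by simp) fun n a b => by rw [map_add, map_add, add_mul]

lemma dy_monomial (n : ℕ) (a : ℂ[X]) : dy (monomial n a) = monomial n (derivative a) := by
  rw [dy, sum_monomial_index _ _ (by simp), C_mul_X_pow_eq_monomial]

lemma iterate_dy_add (j : ℕ) (p q : Bzy) : dy^[j] (p + q) = dy^[j] p + dy^[j] q := by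
  induction j generalizing p q with
  | zero => rfl
  | succ j ih => rw [Function.iterate_succ_apply, dy_add, ih]; rfl

lemma iterate_dy_monomial (j n : ℕ) (a : ℂ[X]) :
    dy^[j] (monomial n a) = monomial n (derivative^[j] a) := by
  induction j generalizing a with
  | zero => rfl
  | succ j ih => rw [Function.iterate_succ_apply, dy_monomial, ih]; rfl

lemma eval₂_iterate_dy (j : ℕ) (Q : Bzy) :
    eval₂ (RingHom.id ℂ[X]) X (dy^[j] Q) = (j ! : ℂ[X]) * diagHasse j Q := by
  induction Q using Polynomial.induction_on' with
  | add p q hp hq => rw [iterate_dy_add, eval₂_add, hp, hq, map_add, mul_add]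
  | monomial n a =>
    rw [iterate_dy_monomial, eval₂_monomial, diagHasse_monomial, RingHom.id_apply,
      ← factorial_smul_hasseDeriv, LinearMap.smul_apply, nsmul_eq_mul, mul_assoc]

lemma aCoef_eq (P : ℕ → Bzy) (j k : ℕ) : aCoef P j k = (j ! : ℂ[X]) * hatA P j k :=
  eval₂_iterate_dy j (bracket P k)

lemma C_one_sub_mul_aCoef_zero (hF : FuncEq ρ P) (k : ℕ) :
    C (1 - (ρ : ℂ)) * aCoef P 0 k = (P k).coeff 0 := by
  have h := X_mul_hatA P 0 k
  rw [diagHasse_zero_P hF, hasseDeriv_zero'] at h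
  rw [aCoef_eq, Nat.factorial_zero, Nat.cast_one, one_mul]
  refine mul_left_cancel₀ (X_sub_C_ne_zero (1 : ℂ)) ?_
  rw [map_sub, C_1]
  linear_combination h

lemma aCoef_eq_zero_of_lt (hF : FuncEq ρ P) {j k : ℕ} (hkj : k < j) : aCoef P j k = 0 := by
  have h := X_mul_hatA P j k
  rw [diagHasse_P_of_lt hF hkj, hasseDeriv_eq_zero_of_lt_natDegree _ _
    ((natDegree_coeff_zero_le hF k).trans_lt hkj), mul_zero, add_zero] at h
  rw [aCoef_eq, (mul_eq_zero.1 h).resolve_left X_ne_zero, mul_zero]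

lemma X_mul_aCoef (hF : FuncEq ρ P) {j k : ℕ} (hj : 1 ≤ j) (hjk : j ≤ k) :
    X * aCoef P j k = Acoef ρ P j k + (X - 1) * derivative^[j] ((P k).coeff 0) := by
  have h := X_mul_hatA P j k
  rw [diagHasse_P_of_le hF hj hjk] at h
  have hj' : (j ! : ℂ[X]) = j * ((j - 1) ! : ℂ[X]) := by
    rw [← Nat.cast_mul, Nat.mul_factorial_pred (by omega)]
  rw [Acoef, if_pos ⟨hj, hjk⟩, aCoef_eq, aCoef_eq, aCoef_eq, ← factorial_smul_hasseDeriv,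
    LinearMap.smul_apply, nsmul_eq_mul]
  linear_combination (j ! : ℂ[X]) * h + C (ρ : ℂ) * hatA P (j - 1) (k - j) * hj'

lemma factorial_mul_coeff_coeff_zero (hF : FuncEq ρ P) {i k : ℕ} (hi : 1 ≤ i) (hik : i ≤ k) :
    (i ! : ℂ) * ((P k).coeff 0).coeff i =
      (1 - ρ) * (aCoef P i (k - i)).eval 0 + (i * ρ) * (aCoef P (i - 1) (k - i)).eval 0 := by
  have hi' : (i ! : ℂ) = i * ((i - 1) ! : ℂ) := by
    rw [← Nat.cast_mul, Nat.mul_factorial_pred (by omega)]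
  rw [← eval_zero_diagHasse, diagHasse_P_of_le hF hi hik, aCoef_eq, aCoef_eq]
  simp only [eval_add, eval_mul, eval_C, eval_one, eval_sub, eval_X, eval_natCast]
  linear_combination (ρ * (hatA P (i - 1) (k - i)).eval 0) * hi'

lemma aCoef_zero_zero (hρ : ρ ≠ 1) (hF : FuncEq ρ P) (hB : Boundary ρ P) :
    aCoef P 0 0 = 1 := by
  have hc := eq_C_of_natDegree_le_zero (natDegree_coeff_zero_le hF 0)
  have h1 := hB.1
  rw [hc, eval_C] at h1
  rw [h1] at hc
  have hρ' : C (1 - (ρ : ℂ)) ≠ 0 := by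
    rw [Ne, C_eq_zero, sub_eq_zero, eq_comm]
    exact_mod_cast hρ
  exact mul_left_cancel₀ hρ' (by rw [mul_one, C_one_sub_mul_aCoef_zero hF, hc])

end ACoef

section FactNorm

noncomputable def factNorm (p : ℂ[X]) : ℝ := p.sum fun n a => n ! * ‖a‖

lemma factNorm_eq_sum_range {p : ℂ[X]} {d : ℕ} (hd : p.natDegree < d) :
    factNorm p = ∑ n ∈ range d, n ! * ‖p.coeff n‖ :=
  sum_over_range' _ (fun _ => by simp) d hd

@[simp] lemma factNorm_zero : factNorm 0 = 0 := sum_zero_index _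

@[simp] lemma factNorm_one : factNorm 1 = 1 := by
  rw [factNorm_eq_sum_range (p := (1 : ℂ[X])) (d := 1) (by simp)]; simp

lemma factNorm_add_le (p q : ℂ[X]) : factNorm (p + q) ≤ factNorm p + factNorm q := by
  set d := max (p + q).natDegree (max p.natDegree q.natDegree) + 1
  rw [factNorm_eq_sum_range (d := d) (by omega), factNorm_eq_sum_range (d := d) (by omega),
    factNorm_eq_sum_range (d := d) (by omega), ← sum_add_distrib]
  gcongr with n
  rw [coeff_add, ← mul_add]
  gcongr
  exact norm_add_le _ _

lemma factNorm_C_mul (c : ℂ) (p : ℂ[X]) : factNorm (C c * p) = ‖c‖ * factNorm p := by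
  rw [factNorm_eq_sum_range (d := p.natDegree + 1)
      ((natDegree_C_mul_le c p).trans_lt (Nat.lt_succ_self _)),
    factNorm_eq_sum_range (Nat.lt_succ_self _), mul_sum]
  simp only [coeff_C_mul, norm_mul]
  exact sum_congr rfl fun _ _ => by ring

lemma factNorm_divX_le (p : ℂ[X]) : factNorm (divX p) ≤ factNorm p := by
  rw [factNorm_eq_sum_range (p := divX p) (d := p.natDegree + 1)
      (by rw [natDegree_divX_eq_natDegree_tsub_one]; omega),
    factNorm_eq_sum_range (p := p) (d := p.natDegree + 2) (by omega),
    sum_range_succ' (fun n => (n ! : ℝ) * ‖p.coeff n‖)]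
  simp only [coeff_divX]
  refine (sum_le_sum fun n _ => ?_).trans (le_add_of_nonneg_right (by positivity))
  gcongr
  exact n.le_succ

lemma divX_X_mul (p : ℂ[X]) : divX (X * p) = p := by
  ext n; rw [coeff_divX, coeff_X_mul]

lemma factNorm_divX_mul_le (u v : ℂ) (p : ℂ[X]) :
    factNorm (divX ((C u + C v * X) * p)) ≤ (‖u‖ + ‖v‖) * factNorm p := by
  have h : divX ((C u + C v * X) * p) = C u * divX p + C v * p := by
    rw [add_mul, divX_add, mul_assoc, divX_C_mul, divX_C_mul, divX_X_mul]
  rw [h, add_mul]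
  refine (factNorm_add_le _ _).trans (add_le_add ?_ (factNorm_C_mul v p).le)
  rw [factNorm_C_mul]
  exact mul_le_mul_of_nonneg_left (factNorm_divX_le p) (norm_nonneg u)

lemma norm_eval_le_factNorm (p : ℂ[X]) {z : ℂ} (hz : ‖z‖ ≤ 1) : ‖p.eval z‖ ≤ factNorm p := by
  rw [eval_eq_sum_range, factNorm_eq_sum_range (Nat.lt_succ_self _)]
  refine (norm_sum_le _ _).trans (sum_le_sum fun n _ => ?_)
  rw [norm_mul, norm_pow]
  calc ‖p.coeff n‖ * ‖z‖ ^ n ≤ 1 * ‖p.coeff n‖ := by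
        rw [one_mul]
        exact mul_le_of_le_one_right (norm_nonneg _) (pow_le_one₀ (norm_nonneg z) hz)
    _ ≤ n ! * ‖p.coeff n‖ := by
        gcongr; exact_mod_cast Nat.one_le_iff_ne_zero.2 n.factorial_ne_zero

lemma factNorm_iterate_derivative {p : ℂ[X]} {d : ℕ} (hd : p.natDegree < d) (j : ℕ) :
    factNorm (derivative^[j] p) = ∑ i ∈ Ico j d, i ! * ‖p.coeff i‖ := by
  rw [factNorm_eq_sum_range (d := d) ((natDegree_iterate_derivative p j).trans_lt (by omega)),
    sum_Ico_eq_sum_range, ← sum_subset (range_subset_range.2 (Nat.sub_le d j))]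
  · refine sum_congr rfl fun m _ => ?_
    rw [coeff_iterate_derivative, nsmul_eq_mul, norm_mul, Complex.norm_natCast, ← mul_assoc,
      ← Nat.cast_mul, add_comm j m]
    congr 2
    rw [← Nat.factorial_mul_descFactorial (Nat.le_add_left j m), Nat.add_sub_cancel]
  · intro m _ hm
    simp only [mem_range, not_lt] at hm
    rw [coeff_iterate_derivative, coeff_eq_zero_of_natDegree_lt (by omega), smul_zero, norm_zero,
      mul_zero]

lemma factNorm_iterate_derivative_eq_add (p : ℂ[X]) (j : ℕ) :
    factNorm (derivative^[j] p) = j ! * ‖p.coeff j‖ + factNorm (derivative^[j + 1] p) := by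
  have hd : p.natDegree < p.natDegree + j + 1 := by omega
  rw [factNorm_iterate_derivative hd, factNorm_iterate_derivative hd,
    sum_eq_sum_Ico_succ_bot (by omega)]

lemma factNorm_iterate_derivative_le (p : ℂ[X]) (j : ℕ) :
    factNorm (derivative^[j] p) ≤ factNorm p := by
  rw [factNorm_iterate_derivative (Nat.lt_succ_self p.natDegree),
    factNorm_eq_sum_range (Nat.lt_succ_self _), range_eq_Ico]
  exact sum_le_sum_of_subset_of_nonneg (Ico_subset_Ico_left (Nat.zero_le j)) fun _ _ _ => by
    positivity

lemma factNorm_le_of_eval_one_eq_zero {p : ℂ[X]} (hp : p.eval 1 = 0) :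
    factNorm p ≤ 2 * ‖p.coeff 1‖ + 3 / 2 * factNorm (derivative^[2] p) := by
  set d := p.natDegree + 2
  have hd : p.natDegree < d := by omega
  have hp0 : ‖p.coeff 0‖ ≤ ‖p.coeff 1‖ + ∑ i ∈ Ico 2 d, ‖p.coeff i‖ := by
    rw [eval_eq_sum_range' hd, ← sum_range_add_sum_Ico _ (by omega : 2 ≤ d)] at hp
    simp only [sum_range_succ, sum_range_zero, one_pow, mul_one, zero_add, add_assoc] at hp
    rw [eq_neg_of_add_eq_zero_left hp, norm_neg]
    exact (norm_add_le _ _).trans (add_le_add_right (norm_sum_le _ _) _)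
  have htail : ∑ i ∈ Ico 2 d, ‖p.coeff i‖ ≤ 1 / 2 * ∑ i ∈ Ico 2 d, i ! * ‖p.coeff i‖ := by
    rw [mul_sum]
    refine sum_le_sum fun i hi => ?_
    have : (2 : ℝ) ≤ i ! := by
      exact_mod_cast (Nat.self_le_factorial i).trans' (mem_Ico.1 hi).1
    nlinarith [norm_nonneg (p.coeff i)]
  rw [factNorm_eq_sum_range hd, factNorm_iterate_derivative hd,
    ← sum_range_add_sum_Ico _ (by omega : 2 ≤ d)]
  simp only [sum_range_succ, sum_range_zero, Nat.factorial_zero, Nat.factorial_one, Nat.cast_one,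
    one_mul, zero_add]
  linarith

end FactNorm

section Estimate

variable {ρ : ℝ} {P : ℕ → Bzy} {x : ℝ}

lemma norm_one_sub_ofReal (hρ : ρ ≤ 1) : ‖(1 : ℂ) - ρ‖ = 1 - ρ := by
  rw [← Complex.ofReal_one, ← Complex.ofReal_sub, Complex.norm_of_nonneg (by linarith)]

lemma factorial_mul_norm_coeff_le (hρ : ρ ∈ Set.Icc (0 : ℝ) 1) (hF : FuncEq ρ P) {i k : ℕ}
    (hi : 1 ≤ i) (hik : i ≤ k) :
    i ! * ‖((P k).coeff 0).coeff i‖ ≤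
      (1 - ρ) * factNorm (aCoef P i (k - i)) + i * ρ * factNorm (aCoef P (i - 1) (k - i)) := by
  have h := congrArg norm (factorial_mul_coeff_coeff_zero hF hi hik)
  rw [norm_mul, Complex.norm_natCast] at h
  rw [h]
  refine (norm_add_le _ _).trans (add_le_add ?_ ?_) <;> rw [norm_mul]
  · rw [norm_one_sub_ofReal hρ.2]
    exact mul_le_mul_of_nonneg_left (norm_eval_le_factNorm _ (by simp)) (by linarith [hρ.2])
  · rw [norm_mul, Complex.norm_natCast, Complex.norm_of_nonneg hρ.1]
    exact mul_le_mul_of_nonneg_left (norm_eval_le_factNorm _ (by simp))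
      (mul_nonneg (Nat.cast_nonneg i) hρ.1)

lemma factNorm_aCoef_le (hρ : ρ ∈ Set.Icc (0 : ℝ) 1) (hF : FuncEq ρ P) {j k : ℕ} (hj : 1 ≤ j)
    (hjk : j ≤ k) :
    factNorm (aCoef P j k) ≤ factNorm (aCoef P j (k - j)) +
      j * ρ * factNorm (aCoef P (j - 1) (k - j)) +
        2 * factNorm (derivative^[j] ((P k).coeff 0)) := by
  have h : aCoef P j k = divX ((C (1 - (ρ : ℂ)) + C (ρ : ℂ) * X) * aCoef P j (k - j)) +
      C ((j : ℂ) * ρ) * divX (aCoef P (j - 1) (k - j)) +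
        divX ((C (-1) + C 1 * X) * derivative^[j] ((P k).coeff 0)) := by
    rw [← divX_X_mul (aCoef P j k), X_mul_aCoef hF hj hjk, Acoef, if_pos ⟨hj, hjk⟩,
      ← divX_C_mul, ← divX_add, ← divX_add]
    congr 1
    simp only [map_mul, map_natCast, map_sub, map_neg, map_one]
    ring
  rw [h]
  refine (factNorm_add_le _ _).trans
    (add_le_add ((factNorm_add_le _ _).trans (add_le_add ?_ ?_)) ?_)
  · refine (factNorm_divX_mul_le _ _ _).trans_eq ?_
    rw [norm_one_sub_ofReal hρ.2, Complex.norm_of_nonneg hρ.1]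
    ring
  · rw [factNorm_C_mul, norm_mul, Complex.norm_natCast, Complex.norm_of_nonneg hρ.1]
    exact mul_le_mul_of_nonneg_left (factNorm_divX_le _) (mul_nonneg (Nat.cast_nonneg j) hρ.1)
  · refine (factNorm_divX_mul_le _ _ _).trans_eq ?_
    norm_num

-- `12/25` lies in the narrow window left by the step `j = 1`, which needs it large, and the
-- step `j = 0`, which needs it small.
noncomputable def aWeight (j : ℕ) : ℝ := if j = 0 then 1 else 12 / 25

lemma aWeight_le_one (j : ℕ) : aWeight j ≤ 1 := by
  unfold aWeight; split_ifs <;> norm_num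

lemma aWeight_nonneg (j : ℕ) : 0 ≤ aWeight j := by
  unfold aWeight; split_ifs <;> norm_num

lemma aWeight_zero : aWeight 0 = 1 := if_pos rfl

lemma aWeight_of_ne_zero {j : ℕ} (hj : j ≠ 0) : aWeight j = 12 / 25 := if_neg hj

lemma pow_mul_factorial_mul_norm_coeff_le (hρ : ρ ∈ Set.Icc (0 : ℝ) 1) (hF : FuncEq ρ P)
    (hx : 0 ≤ x) {k : ℕ} (hIH : ∀ κ < k, ∀ j, factNorm (aCoef P j κ) * x ^ κ ≤ aWeight j)
    {i : ℕ} (hi : 1 ≤ i) (hik : i ≤ k) :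
    x ^ k * (i ! * ‖((P k).coeff 0).coeff i‖) ≤
      x ^ i * ((1 - ρ) * aWeight i + i * ρ * aWeight (i - 1)) := by
  have hk : x ^ k = x ^ i * x ^ (k - i) := by rw [← pow_add, Nat.add_sub_cancel' hik]
  have h1 := hIH (k - i) (by omega) i
  have h2 := hIH (k - i) (by omega) (i - 1)
  have hρ1 : 0 ≤ 1 - ρ := by linarith [hρ.2]
  have hiρ : 0 ≤ (i : ℝ) * ρ := mul_nonneg (Nat.cast_nonneg i) hρ.1
  rw [hk, mul_assoc]
  gcongr
  calc x ^ (k - i) * (i ! * ‖((P k).coeff 0).coeff i‖)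
      ≤ x ^ (k - i) * ((1 - ρ) * factNorm (aCoef P i (k - i)) +
          i * ρ * factNorm (aCoef P (i - 1) (k - i))) := by
        gcongr; exact factorial_mul_norm_coeff_le hρ hF hi hik
    _ = (1 - ρ) * (factNorm (aCoef P i (k - i)) * x ^ (k - i)) +
          i * ρ * (factNorm (aCoef P (i - 1) (k - i)) * x ^ (k - i)) := by ring
    _ ≤ (1 - ρ) * aWeight i + i * ρ * aWeight (i - 1) := by gcongr

lemma pow_mul_factNorm_iterate_derivative_le (hρ : ρ ∈ Set.Icc (0 : ℝ) 1) (hF : FuncEq ρ P)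
    (hx : x ∈ Set.Icc 0 (1 / 7)) {k : ℕ}
    (hIH : ∀ κ < k, ∀ j, factNorm (aCoef P j κ) * x ^ κ ≤ aWeight j) {a : ℕ} (ha : 2 ≤ a) :
    x ^ k * factNorm (derivative^[a] ((P k).coeff 0)) ≤ 42 / 125 * (2 * x) ^ a := by
  obtain ⟨hx0, hx7⟩ := hx
  have hterm : ∀ i ∈ Ico a (k + 1), x ^ k * (i ! * ‖((P k).coeff 0).coeff i‖) ≤
      6 / 25 * (2 * x) ^ i := fun i hi => by
    obtain ⟨hai, hik⟩ := mem_Ico.1 hi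
    refine (pow_mul_factorial_mul_norm_coeff_le hρ hF hx0 hIH (by omega) (by omega)).trans ?_
    rw [aWeight_of_ne_zero (by omega), aWeight_of_ne_zero (by omega)]
    have hi1 : (1 : ℝ) ≤ i := by exact_mod_cast (show 1 ≤ i by omega)
    have hi2 : (i : ℝ) ≤ 2 ^ (i - 1) := by
      have := Nat.lt_two_pow_self (n := i - 1)
      exact_mod_cast (show i ≤ 2 ^ (i - 1) by omega)
    have hweight : (1 - ρ) + i * ρ ≤ 2 ^ (i - 1) := by
      nlinarith [mul_nonneg (sub_nonneg.2 hi1) (sub_nonneg.2 hρ.2)]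
    calc x ^ i * ((1 - ρ) * (12 / 25) + i * ρ * (12 / 25))
        = 12 / 25 * x ^ i * ((1 - ρ) + i * ρ) := by ring
      _ ≤ 12 / 25 * x ^ i * 2 ^ (i - 1) := by gcongr
      _ = 6 / 25 * (2 * x) ^ i := by
        rw [mul_pow, ← Nat.sub_add_cancel (show 1 ≤ i by omega), pow_succ', Nat.add_sub_cancel]
        ring
  calc x ^ k * factNorm (derivative^[a] ((P k).coeff 0))
      = ∑ i ∈ Ico a (k + 1), x ^ k * (i ! * ‖((P k).coeff 0).coeff i‖) := by
        rw [factNorm_iterate_derivative (Nat.lt_succ_of_le (natDegree_coeff_zero_le hF k)),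
          mul_sum]
    _ ≤ 6 / 25 * ∑ i ∈ Ico a (k + 1), (2 * x) ^ i := by rw [mul_sum]; exact sum_le_sum hterm
    _ ≤ 6 / 25 * ((2 * x) ^ a / (1 - 2 * x)) := by
        gcongr; exact geom_sum_Ico_le_of_lt_one (by linarith) (by linarith)
    _ ≤ 42 / 125 * (2 * x) ^ a := by
        rw [← mul_div_assoc, div_le_iff₀ (by linarith)]
        nlinarith [pow_nonneg (mul_nonneg zero_le_two hx0) a]

lemma factNorm_aCoef_zero_mul_pow_le (hρ : ρ ∈ Set.Ioo (0 : ℝ) 1) (hF : FuncEq ρ P)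
    (hB : Boundary ρ P) (hx : x ∈ Set.Icc 0 (1 / 7)) (hxρ : 2 * x ≤ 1 - ρ) {k : ℕ} (hk : 1 ≤ k)
    (hIH : ∀ κ < k, ∀ j, factNorm (aCoef P j κ) * x ^ κ ≤ aWeight j) :
    factNorm (aCoef P 0 k) * x ^ k ≤ 1 := by
  have hρ' : ρ ∈ Set.Icc (0 : ℝ) 1 := Set.Ioo_subset_Icc_self hρ
  have hN : factNorm ((P k).coeff 0) = (1 - ρ) * factNorm (aCoef P 0 k) := by
    rw [← C_one_sub_mul_aCoef_zero hF, factNorm_C_mul, norm_one_sub_ofReal hρ.2.le]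
  have hc := factNorm_le_of_eval_one_eq_zero (hB.2 k hk)
  have hc1 := pow_mul_factorial_mul_norm_coeff_le hρ' hF hx.1 hIH le_rfl hk
  have hc2 := pow_mul_factNorm_iterate_derivative_le hρ' hF hx hIH le_rfl
  rw [aWeight_of_ne_zero one_ne_zero, Nat.sub_self, aWeight_zero, Nat.factorial_one,
    Nat.cast_one, one_mul, pow_one] at hc1
  have hnum : 2 * (x * ((1 - ρ) * (12 / 25) + 1 * ρ * 1)) + 3 / 2 * (42 / 125 * (2 * x) ^ 2) ≤
      1 - ρ := by
    nlinarith [mul_nonneg (mul_nonneg hx.1 hx.1) (sub_nonneg.2 hxρ),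
      mul_nonneg hx.1 (sub_nonneg.2 hxρ), mul_nonneg (sub_nonneg.2 hx.2) (sub_nonneg.2 hxρ),
      mul_nonneg (sub_nonneg.2 hx.2) hx.1]
  have hprod : (1 - ρ) * (factNorm (aCoef P 0 k) * x ^ k) ≤ (1 - ρ) * 1 := by
    calc (1 - ρ) * (factNorm (aCoef P 0 k) * x ^ k) = x ^ k * factNorm ((P k).coeff 0) := by
          rw [hN]; ring
      _ ≤ x ^ k * (2 * ‖((P k).coeff 0).coeff 1‖ +
            3 / 2 * factNorm (derivative^[2] ((P k).coeff 0))) :=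
          mul_le_mul_of_nonneg_left hc (pow_nonneg hx.1 k)
      _ = 2 * (x ^ k * ‖((P k).coeff 0).coeff 1‖) +
            3 / 2 * (x ^ k * factNorm (derivative^[2] ((P k).coeff 0))) := by ring
      _ ≤ (1 - ρ) * 1 := by linarith
  exact le_of_mul_le_mul_left hprod (by linarith [hρ.2])

lemma factNorm_aCoef_mul_pow_le_add (hρ : ρ ∈ Set.Icc (0 : ℝ) 1) (hF : FuncEq ρ P)
    (hx : 0 ≤ x) {k : ℕ} (hIH : ∀ κ < k, ∀ j, factNorm (aCoef P j κ) * x ^ κ ≤ aWeight j)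
    {j : ℕ} (hj : 1 ≤ j) (hjk : j ≤ k) :
    factNorm (aCoef P j k) * x ^ k ≤ x ^ j * (aWeight j + j * ρ * aWeight (j - 1)) +
      2 * (x ^ k * factNorm (derivative^[j] ((P k).coeff 0))) := by
  have hk : x ^ k = x ^ j * x ^ (k - j) := by rw [← pow_add, Nat.add_sub_cancel' hjk]
  have h1 := hIH (k - j) (by omega) j
  have h2 := hIH (k - j) (by omega) (j - 1)
  have hjρ : 0 ≤ (j : ℝ) * ρ := mul_nonneg (Nat.cast_nonneg j) hρ.1
  calc factNorm (aCoef P j k) * x ^ k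
      ≤ (factNorm (aCoef P j (k - j)) + j * ρ * factNorm (aCoef P (j - 1) (k - j)) +
          2 * factNorm (derivative^[j] ((P k).coeff 0))) * x ^ k := by
        gcongr; exact factNorm_aCoef_le hρ hF hj hjk
    _ = x ^ j * (factNorm (aCoef P j (k - j)) * x ^ (k - j) +
          j * ρ * (factNorm (aCoef P (j - 1) (k - j)) * x ^ (k - j))) +
          2 * (x ^ k * factNorm (derivative^[j] ((P k).coeff 0))) := by rw [hk]; ring
    _ ≤ _ := by gcongr

lemma factNorm_aCoef_one_mul_pow_le (hρ : ρ ∈ Set.Icc (0 : ℝ) 1) (hF : FuncEq ρ P)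
    (hx : x ∈ Set.Icc 0 (1 / 7)) (hxρ : 2 * x ≤ 1 - ρ) {k : ℕ} (hk : 1 ≤ k)
    (hIH : ∀ κ < k, ∀ j, factNorm (aCoef P j κ) * x ^ κ ≤ aWeight j) :
    factNorm (aCoef P 1 k) * x ^ k ≤ 12 / 25 := by
  have h := factNorm_aCoef_mul_pow_le_add hρ hF hx.1 hIH le_rfl hk
  have hc1 := pow_mul_factorial_mul_norm_coeff_le hρ hF hx.1 hIH le_rfl hk
  have hc2 := pow_mul_factNorm_iterate_derivative_le hρ hF hx hIH le_rfl
  rw [factNorm_iterate_derivative_eq_add, Nat.factorial_one, Nat.cast_one, one_mul] at h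
  rw [Nat.factorial_one, Nat.cast_one, one_mul] at hc1
  simp only [aWeight_of_ne_zero one_ne_zero, Nat.sub_self, aWeight_zero, pow_one,
    Nat.reduceAdd] at h hc1
  nlinarith [mul_nonneg (mul_nonneg hx.1 hx.1) (sub_nonneg.2 hxρ),
    mul_nonneg hx.1 (sub_nonneg.2 hxρ), mul_nonneg (sub_nonneg.2 hx.2) (sub_nonneg.2 hxρ),
    mul_nonneg (sub_nonneg.2 hx.2) hx.1]

lemma factNorm_aCoef_mul_pow_le_of_two_le (hρ : ρ ∈ Set.Icc (0 : ℝ) 1) (hF : FuncEq ρ P)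
    (hx : x ∈ Set.Icc 0 (1 / 7)) {k : ℕ}
    (hIH : ∀ κ < k, ∀ j, factNorm (aCoef P j κ) * x ^ κ ≤ aWeight j) {j : ℕ} (hj : 2 ≤ j)
    (hjk : j ≤ k) :
    factNorm (aCoef P j k) * x ^ k ≤ 12 / 25 := by
  have h := factNorm_aCoef_mul_pow_le_add hρ hF hx.1 hIH (by omega) hjk
  have hc := pow_mul_factNorm_iterate_derivative_le hρ hF hx hIH hj
  rw [aWeight_of_ne_zero (by omega), aWeight_of_ne_zero (by omega)] at h
  have h2x : 0 ≤ 2 * x := by linarith [hx.1]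
  have hj2 : (1 + j * ρ) * x ^ j ≤ (2 * x) ^ j := by
    have : (j : ℝ) + 1 ≤ 2 ^ j := by exact_mod_cast Nat.lt_two_pow_self
    rw [mul_pow]
    exact mul_le_mul_of_nonneg_right (by nlinarith [hρ.2, Nat.cast_nonneg (α := ℝ) j])
      (pow_nonneg hx.1 j)
  have hsmall : (2 * x) ^ j ≤ 4 / 49 := by
    calc (2 * x) ^ j ≤ (2 * x) ^ 2 := pow_le_pow_of_le_one h2x (by linarith [hx.2]) hj
      _ ≤ 4 / 49 := by nlinarith [hx.1, hx.2]
  nlinarith [pow_nonneg hx.1 j]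

theorem factNorm_aCoef_mul_pow_le (hρ : ρ ∈ Set.Ioo (0 : ℝ) 1) (hF : FuncEq ρ P)
    (hB : Boundary ρ P) (hx : x ∈ Set.Icc 0 (1 / 7)) (hxρ : 2 * x ≤ 1 - ρ) (k j : ℕ) :
    factNorm (aCoef P j k) * x ^ k ≤ aWeight j := by
  have hρ' : ρ ∈ Set.Icc (0 : ℝ) 1 := Set.Ioo_subset_Icc_self hρ
  induction k using Nat.strong_induction_on generalizing j with
  | _ k hIH =>
  rcases lt_or_ge k j with hkj | hjk
  · rw [aCoef_eq_zero_of_lt hF hkj, factNorm_zero, zero_mul]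
    exact aWeight_nonneg j
  match j, k, hjk with
  | 0, 0, _ => rw [aCoef_zero_zero hρ.2.ne hF hB, factNorm_one, one_mul, pow_zero, aWeight_zero]
  | 0, k + 1, _ =>
    rw [aWeight_zero]
    exact factNorm_aCoef_zero_mul_pow_le hρ hF hB hx hxρ (by omega) hIH
  | 1, k, hjk =>
    rw [aWeight_of_ne_zero one_ne_zero]
    exact factNorm_aCoef_one_mul_pow_le hρ' hF hx hxρ hjk hIH
  | j + 2, k, hjk =>
    rw [aWeight_of_ne_zero (by omega)]
    exact factNorm_aCoef_mul_pow_le_of_two_le hρ' hF hx hIH (by omega) hjk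

end Estimate

lemma seven_le_exp_two : 7 ≤ Real.exp 2 := by
  have h := Real.exp_one_gt_d9
  have h2 : Real.exp 2 = Real.exp 1 * Real.exp 1 := by rw [← Real.exp_add]; norm_num
  nlinarith

theorem stmt16_general (ρ : ℝ) (hρ : ρ ∈ Set.Ioo (0 : ℝ) 1) (P : ℕ → Bzy)
    (hF : FuncEq ρ P) (hB : Boundary ρ P) :
    ∀ k l m : ℕ, ∀ z : ℂ, ‖z‖ ≤ 1 →
      ‖((Polynomial.derivative^[m]) (aCoef P l k)).eval z‖ ≤
        (max (Real.exp 2) (2 / (1 - ρ))) ^ k := by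
  intro k l m z hz
  set K := max (Real.exp 2) (2 / (1 - ρ))
  have hK7 : 7 ≤ K := seven_le_exp_two.trans (le_max_left _ _)
  have hK0 : 0 < K := by linarith
  have hx : K⁻¹ ∈ Set.Icc 0 (1 / 7) :=
    ⟨inv_nonneg.2 hK0.le, (inv_anti₀ (by norm_num) hK7).trans_eq (one_div 7).symm⟩
  have hxρ : 2 * K⁻¹ ≤ 1 - ρ := by
    have h : K⁻¹ ≤ (2 / (1 - ρ))⁻¹ :=
      inv_anti₀ (div_pos two_pos (by linarith [hρ.2])) (le_max_right _ _)
    rw [inv_div] at h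
    linarith
  have hbound := factNorm_aCoef_mul_pow_le hρ hF hB hx hxρ k l
  rw [inv_pow, ← div_eq_mul_inv, div_le_iff₀ (pow_pos hK0 k)] at hbound
  calc ‖(derivative^[m] (aCoef P l k)).eval z‖
      ≤ factNorm (derivative^[m] (aCoef P l k)) := norm_eval_le_factNorm _ hz
    _ ≤ factNorm (aCoef P l k) := factNorm_iterate_derivative_le _ _
    _ ≤ K ^ k := hbound.trans (mul_le_of_le_one_left (pow_pos hK0 k).le (aWeight_le_one l))

theorem stmt16 (ρ : ℝ) (hρ : ρ ∈ Set.Ioo (0 : ℝ) 1) (P : ℕ → Bzy)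
    (hF : FuncEq ρ P) (hI : IndepY P) (hB : Boundary ρ P) :
    ∀ k l m : ℕ, ∀ z : ℂ, ‖z‖ ≤ 1 →
      ‖((Polynomial.derivative^[m]) (aCoef P l k)).eval z‖ ≤
        (max (Real.exp 2) (2 / (1 - ρ))) ^ k :=
  stmt16_general ρ hρ P hF hB
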